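/- arXiv:1704.02623 — 4 statements merged into one kernel-verified Lean document; each statement's English description precedes it below -/
import Mathlib

section
/- In the monoid M presented by generators a, b and the single relation a*b*a = a, the idempotent elements are exactly 1, a*b, and b*a: an element x of M satisfies x*x = x if and only if x = 1 or x = a*b or x = b*a. Moreover the three elements 1, a*b, b*a of M are pairwise distinct. -/
/-- The two generators `a` and `b`. -/
inductive Gen : Type
  | a : Gen
  | b : Gen

/-- The single relation `a*b*a = a`. -/
def abaRel : FreeMonoid Gen → FreeMonoid Gen → Prop := fun w₁ w₂ =>
  w₁ = FreeMonoid.of Gen.a * FreeMonoid.of Gen.b * FreeMonoid.of Gen.a ∧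
  w₂ = FreeMonoid.of Gen.a

/-- The monoid presented by generators `a, b` and the relation `a*b*a = a`. -/
abbrev M := PresentedMonoid abaRel

/-- The generator `a` of `M`. -/
def a : M := PresentedMonoid.of abaRel Gen.a

/-- The generator `b` of `M`. -/
def b : M := PresentedMonoid.of abaRel Gen.b

/-!
Orienting the relation as `aba → a`, the normal forms are the words with no factor `aba`.
Prepending a letter to a word and cancelling a `ba` that would complete an `aba` is an action of `M`
on words; it maps a word `w` to a word representing `x * w`, so `x ↦ x • []` is injective.
The normal form of `x * y` is the concatenation of those of `x` and `y` with at most one `ba`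
cancelled at the junction. For an idempotent of normal form `w` this gives `|w| = 2|w|` or
`|w| = 2|w| - 2`, so `w` is empty, `ab` or `ba`.
-/

namespace M

def reduceCons : Gen → List Gen → List Gen
  | .a, .b :: .a :: t => .a :: t
  | g, l => g :: l

theorem reduceCons_aba (l : List Gen) :
    reduceCons .a (reduceCons .b (reduceCons .a l)) = reduceCons .a l := by
  rcases l with _ | ⟨_ | _, _ | ⟨_ | _, t⟩⟩ <;> rfl

instance : MulAction M (List Gen) :=
  MulAction.compHom _ <| PresentedMonoid.lift (M := Function.End (List Gen)) reduceCons <| by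
    rintro _ _ ⟨rfl, rfl⟩
    funext l
    exact reduceCons_aba l

theorem of_smul (g : Gen) (l : List Gen) : PresentedMonoid.of abaRel g • l = reduceCons g l := rfl

def normalForm (x : M) : List Gen := x • []

def ofWord (w : List Gen) : M := (w.map (PresentedMonoid.of abaRel)).prod

theorem ofWord_cons (g : Gen) (w : List Gen) :
    ofWord (g :: w) = PresentedMonoid.of abaRel g * ofWord w := List.prod_cons

theorem a_mul_b_mul_a : a * b * a = a :=
  PresentedMonoid.mk_eq_mk_of_rel ⟨rfl, rfl⟩

theorem ofWord_reduceCons (g : Gen) (l : List Gen) :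
    ofWord (reduceCons g l) = PresentedMonoid.of abaRel g * ofWord l := by
  fun_cases reduceCons g l with
  | case1 t =>
    simp only [ofWord_cons, ← mul_assoc]
    rw [← a, ← b, a_mul_b_mul_a]
  | case2 => rfl

theorem ofWord_smul (x : M) (l : List Gen) : ofWord (x • l) = x * ofWord l := by
  induction x using Submonoid.dense_induction _ (PresentedMonoid.closure_range_of abaRel)
    generalizing l with
  | mem _ hx =>
    obtain ⟨g, rfl⟩ := hx
    exact ofWord_reduceCons g l
  | one => rw [one_smul, one_mul]
  | mul x y hx hy => rw [mul_smul, hx, hy, mul_assoc]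

theorem ofWord_normalForm (x : M) : ofWord (normalForm x) = x :=
  (ofWord_smul x []).trans (mul_one x)

theorem smul_eq_foldr (x : M) (l : List Gen) : x • l = (normalForm x).foldr reduceCons l := by
  suffices h : ∀ w, ofWord w • l = w.foldr reduceCons l by rw [← h, ofWord_normalForm]
  intro w
  induction w with
  | nil => exact one_smul M l
  | cons g w ih => rw [ofWord_cons, mul_smul, ih, of_smul, List.foldr_cons]

theorem normalForm_mul (x y : M) :
    normalForm (x * y) = (normalForm x).foldr reduceCons (normalForm y) := by
  rw [normalForm, mul_smul, smul_eq_foldr]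
  rfl

def IsReducedWord (w : List Gen) : Prop := ¬ [.a, .b, .a] <:+: w

theorem IsReducedWord.mono {l₁ l₂ : List Gen} (h : l₁ <:+: l₂) (hl : IsReducedWord l₂) :
    IsReducedWord l₁ :=
  fun h' => hl (h'.trans h)

theorem isReducedWord_cons_iff {g : Gen} {l : List Gen} :
    IsReducedWord (g :: l) ↔ ¬ [.a, .b, .a] <+: g :: l ∧ IsReducedWord l := by
  simp only [IsReducedWord, List.infix_cons_iff, not_or]

theorem reduceCons_of_isReducedWord {g : Gen} {l : List Gen} (h : IsReducedWord (g :: l)) :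
    reduceCons g l = g :: l := by
  fun_cases reduceCons g l with
  | case1 t => exact absurd (List.prefix_append _ t).isInfix h
  | case2 => rfl

theorem isReducedWord_reduceCons (g : Gen) {l : List Gen} (hl : IsReducedWord l) :
    IsReducedWord (reduceCons g l) := by
  fun_cases reduceCons g l with
  | case1 t => exact hl.mono (List.suffix_cons _ _).isInfix
  | case2 g l hgl =>
    refine isReducedWord_cons_iff.2 ⟨?_, hl⟩
    rintro ⟨t, ht⟩
    obtain ⟨rfl, rfl⟩ := List.cons_eq_cons.1 ht
    exact hgl t rfl rfl

theorem IsReducedWord.smul (x : M) {l : List Gen} (hl : IsReducedWord l) :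
    IsReducedWord (x • l) := by
  induction x using Submonoid.dense_induction _ (PresentedMonoid.closure_range_of abaRel)
    generalizing l with
  | mem _ hx =>
    obtain ⟨g, rfl⟩ := hx
    exact isReducedWord_reduceCons g hl
  | one => rwa [one_smul]
  | mul x y hx hy => rw [mul_smul]; exact hx (hy hl)

theorem isReducedWord_normalForm (x : M) : IsReducedWord (normalForm x) :=
  IsReducedWord.smul x (by simp [IsReducedWord])

theorem foldr_reduceCons_of_isReducedWord {w l : List Gen} (h : IsReducedWord (w ++ l)) :
    w.foldr reduceCons l = w ++ l := by
  induction w with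
  | nil => rfl
  | cons g w ih =>
    rw [List.foldr_cons, ih (h.mono (List.suffix_cons _ _).isInfix)]
    exact reduceCons_of_isReducedWord h

theorem IsReducedWord.append_cons_a {p t : List Gen} (hp : IsReducedWord (p ++ [.a]))
    (ht : IsReducedWord (.a :: t)) : IsReducedWord (p ++ .a :: t) := by
  induction p with
  | nil => exact ht
  | cons g p ih =>
    rw [List.cons_append, isReducedWord_cons_iff] at hp ⊢
    refine ⟨?_, ih hp.2⟩
    rcases p with _ | ⟨_, _ | _⟩ <;> simp_all

theorem exists_of_not_isReducedWord_append {w v : List Gen} (hw : IsReducedWord w)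
    (hv : IsReducedWord v) (hwv : ¬ IsReducedWord (w ++ v)) :
    (∃ p t, w = p ++ [.a, .b] ∧ v = .a :: t) ∨ (∃ p t, w = p ++ [.a] ∧ v = .b :: .a :: t) := by
  induction w with
  | nil => exact absurd hv hwv
  | cons g w ih =>
    rw [isReducedWord_cons_iff] at hw
    by_cases hwv' : IsReducedWord (w ++ v)
    · rw [List.cons_append, isReducedWord_cons_iff] at hwv
      have hpre : [Gen.a, .b, .a] <+: g :: (w ++ v) := by tauto
      match w with
      | [] =>
        simp only [List.nil_append, List.cons_prefix_cons] at hpre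
        obtain ⟨rfl, t, rfl⟩ := hpre
        exact .inr ⟨[], t, rfl, rfl⟩
      | [c] =>
        simp only [List.cons_append, List.nil_append, List.cons_prefix_cons] at hpre
        obtain ⟨rfl, rfl, t, rfl⟩ := hpre
        exact .inl ⟨[], t, rfl, rfl⟩
      | _ :: _ :: _ => simp_all
    · rcases ih hw.2 hwv' with ⟨p, t, rfl, rfl⟩ | ⟨p, t, rfl, rfl⟩
      · exact .inl ⟨g :: p, t, rfl, rfl⟩
      · exact .inr ⟨g :: p, t, rfl, rfl⟩

theorem IsReducedWord.eq_of_foldr_self {w : List Gen} (hw : IsReducedWord w)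
    (h : w.foldr reduceCons w = w) : w = [] ∨ w = [.a, .b] ∨ w = [.b, .a] := by
  by_cases hww : IsReducedWord (w ++ w)
  · rw [foldr_reduceCons_of_isReducedWord hww, List.append_right_eq_self] at h
    exact .inl h
  rcases exists_of_not_isReducedWord_append hw hw hww with ⟨p, t, hp, ht⟩ | ⟨p, t, hp, ht⟩
  · have hpa : IsReducedWord (p ++ [.a]) := hw.mono (by rw [hp]; exact ⟨[], [.b], by simp⟩)
    have hw' : w = p ++ .a :: t := calc
      w = List.foldr reduceCons (.a :: t) (p ++ [.a, .b]) := by rw [← hp, ← ht, h]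
      _ = p ++ .a :: t := by
        rw [List.foldr_append]
        exact foldr_reduceCons_of_isReducedWord (hpa.append_cons_a (ht ▸ hw))
    obtain rfl : t = [.b] := (List.cons.inj (List.append_cancel_left (hw'.symm.trans hp))).2
    exact .inr (.inl ht)
  · have hw' : w = p ++ .a :: t := calc
      w = List.foldr reduceCons (.b :: .a :: t) (p ++ [.a]) := by rw [← hp, ← ht, h]
      _ = p ++ .a :: t := by
        rw [List.foldr_append]
        exact foldr_reduceCons_of_isReducedWord
          ((hp ▸ hw).append_cons_a (hw.mono (ht ▸ (List.suffix_cons _ _).isInfix)))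
    obtain rfl : t = [] := (List.cons.inj (List.append_cancel_left (hw'.symm.trans hp))).2
    exact .inr (.inr ht)

theorem normalForm_of_mul_self {x : M} (hx : x * x = x) :
    normalForm x = [] ∨ normalForm x = [.a, .b] ∨ normalForm x = [.b, .a] :=
  (isReducedWord_normalForm x).eq_of_foldr_self (by rw [← normalForm_mul, hx])

end M

theorem idempotents_of_aba_monoid :
    (∀ x : M, x * x = x ↔ x = 1 ∨ x = a * b ∨ x = b * a) ∧
    (1 : M) ≠ a * b ∧ (1 : M) ≠ b * a ∧ a * b ≠ b * a := by
  refine ⟨fun x => ⟨fun hx => ?_, ?_⟩, ?_, ?_, ?_⟩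
  · rcases M.normalForm_of_mul_self hx with h | h | h <;> rw [← M.ofWord_normalForm x, h]
    exacts [.inl rfl, .inr (.inl (congrArg (a * ·) (mul_one b))),
      .inr (.inr (congrArg (b * ·) (mul_one a)))]
  · rintro (rfl | rfl | rfl)
    · exact one_mul 1
    · rw [← mul_assoc, M.a_mul_b_mul_a]
    · rw [mul_assoc, ← mul_assoc a, M.a_mul_b_mul_a]
  all_goals exact fun h => nomatch congrArg M.normalForm h
end

section
/- In the monoid M presented by generators a, b and the single relation a*b*a = a, the only unit is the identity: if x, y are elements of M with x*y = 1, then x = 1 and y = 1. -/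
/-! Sending every generator to `0 ∈ (ℕ, *)` respects any relation that never equates the empty
word with a nonempty one, such as `aba = a`. The resulting homomorphism takes the value `1` only
at `1`, and `1` is the only unit of `ℕ`. -/

theorem FreeMonoid.lift_const_zero {α M₀ : Type*} [MonoidWithZero M₀] (w : FreeMonoid α) :
    FreeMonoid.lift (fun _ => (0 : M₀)) w = 0 ^ w.length := by
  rw [FreeMonoid.lift_apply, List.map_const', List.prod_replicate, FreeMonoid.length]

namespace PresentedMonoid

variable {α : Type*} {rels : FreeMonoid α → FreeMonoid α → Prop}
  (hrels : ∀ w₁ w₂, rels w₁ w₂ → (w₁ = 1 ↔ w₂ = 1))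

def liftZero : PresentedMonoid rels →* ℕ :=
  lift (fun _ => 0) fun w₁ w₂ h => by
    have hlen := hrels w₁ w₂ h
    rw [← FreeMonoid.length_eq_zero, ← FreeMonoid.length_eq_zero] at hlen
    simp only [FreeMonoid.lift_const_zero, zero_pow_eq, hlen]

include hrels in
theorem eq_one_of_liftZero_eq_one {x : PresentedMonoid rels} (hx : liftZero hrels x = 1) :
    x = 1 := by
  induction x using PresentedMonoid.inductionOn with
  | h w =>
    have hw : 0 ^ w.length = 1 := (FreeMonoid.lift_const_zero w).symm.trans hx
    rw [FreeMonoid.length_eq_zero.mp (zero_pow_eq_one₀.mp hw), map_one]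

include hrels in
theorem eq_one_and_eq_one_of_mul_eq_one {x y : PresentedMonoid rels} (h : x * y = 1) :
    x = 1 ∧ y = 1 := by
  have hxy : liftZero hrels x * liftZero hrels y = 1 := by rw [← map_mul, h, map_one]
  obtain ⟨hx, hy⟩ := mul_eq_one.mp hxy
  exact ⟨eq_one_of_liftZero_eq_one hrels hx, eq_one_of_liftZero_eq_one hrels hy⟩

end PresentedMonoid

theorem abaRel_eq_one_iff : ∀ w₁ w₂, abaRel w₁ w₂ → (w₁ = 1 ↔ w₂ = 1) := by
  rintro _ _ ⟨rfl, rfl⟩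
  simp

theorem units_of_aba_monoid (x y : M) (h : x * y = 1) : x = 1 ∧ y = 1 :=
  PresentedMonoid.eq_one_and_eq_one_of_mul_eq_one abaRel_eq_one_iff h
end

section
/- Let M be the monoid presented by generators a, b and the single relation a*b*a = a. The one-object category SingleObj M is not idempotent complete: the endomorphism given by the element a*b is idempotent (since abab = ab in M) but admits no splitting, i.e. there are no elements p, i of M with p*i = a*b and i*p = 1. -/
open CategoryTheory

/-- A homomorphism to the multiplicative monoid `ℕ` sending `a ↦ 0`, `b ↦ 1`. -/
def φ : M →* ℕ :=
  PresentedMonoid.lift (fun g => match g with | Gen.a => 0 | Gen.b => 1)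
    (by rintro _ _ ⟨rfl, rfl⟩; simp)

lemma φ_a : φ a = 0 := rfl

lemma φ_b : φ b = 1 := rfl

lemma aba_eq : a * b * a = a :=
  Quotient.sound (ConGen.Rel.of _ _ ⟨rfl, rfl⟩)

lemma no_split : ¬ ∃ p i : M, p * i = a * b ∧ i * p = 1 := by
  rintro ⟨p, i, hpi, hip⟩
  have h1 : φ i * φ p = 1 := by rw [← map_mul, hip, map_one]
  have h2 : φ p * φ i = 0 := by rw [← map_mul, hpi, map_mul, φ_a, φ_b]
  exact absurd h2 (by rw [Nat.mul_comm] at h1; omega)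

theorem singleObj_aba_monoid_not_idempotentComplete :
    ¬ IsIdempotentComplete (SingleObj M) ∧
    (a * b) * (a * b) = a * b ∧
    ¬ ∃ p i : M, p * i = a * b ∧ i * p = 1 := by
  have habab : (a * b) * (a * b) = a * b := by
    calc (a * b) * (a * b) = (a * b * a) * b := by simp [mul_assoc]
    _ = a * b := by rw [aba_eq]
  refine ⟨?_, habab, no_split⟩
  intro h
  obtain ⟨Y, i, e, h1, h2⟩ := h.idempotents_split (SingleObj.star M) (a * b)
    (by rw [SingleObj.comp_as_mul]; exact habab)
  rw [SingleObj.comp_as_mul] at h1 h2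
  rw [SingleObj.id_as_one] at h1
  exact no_split ⟨i, e, h2, h1⟩
end

section
/- Let r be a binary relation on a type α that is quasi-terminating and confluent. Then every element u of α has a quasi-normal form: there exists v with u →* v such that for every w with v →* w one has w →* v. -/
/-- A relation is confluent if any two rewriting sequences from a common source can be
completed to a common target. -/
def Confluent {α : Type*} (r : α → α → Prop) : Prop :=
  ∀ u v w : α, Relation.ReflTransGen r u v → Relation.ReflTransGen r u w →
    ∃ z : α, Relation.ReflTransGen r v z ∧ Relation.ReflTransGen r w z

/-- A relation is quasi-terminating if every infinite rewriting sequence contains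
infinitely many occurrences of some element. -/
def QuasiTerminating {α : Type*} (r : α → α → Prop) : Prop :=
  ∀ f : ℕ → α, (∀ i : ℕ, r (f i) (f (i + 1))) → ∃ a : α, {i : ℕ | f i = a}.Infinite

/-!
Quasi-normal forms of `u` are the elements reachable from `u` that are minimal for the strict
part of the reachability preorder `→*`, so it suffices that this strict part is well-founded.
An infinite strictly descending chain `g 0 →⁺ g 1 →⁺ ⋯` refines to an infinite rewriting
sequence passing through every `g n` in order; an element `a` occurring infinitely often in that
sequence occurs both before some `g n` and after `g (n + 1)`, whence `g (n + 1) →* a →* g n`,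
contradicting strictness.
-/

open Relation

theorem Relation.TransGen.exists_path {α : Type*} {r : α → α → Prop} {a b : α}
    (h : TransGen r a b) :
    ∃ n, 0 < n ∧ ∃ p : ℕ → α, p 0 = a ∧ p n = b ∧ ∀ i < n, r (p i) (p (i + 1)) := by
  induction h using TransGen.head_induction_on with
  | @single a hab => exact ⟨1, one_pos, fun | 0 => a | _ + 1 => b, rfl, rfl, by simpa⟩
  | @head a c hac _ ih =>
    obtain ⟨n, -, p, hp0, hpn, hp⟩ := ih
    refine ⟨n + 1, n.succ_pos, fun | 0 => a | i + 1 => p i, rfl, hpn, ?_⟩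
    rintro (_ | i) hi
    · simpa [hp0] using hac
    · exact hp i (by omega)

/-- `blockIndex N i = (k, j)` when position `i` is offset `j` in block `k`, the blocks, of lengths
`N k`, being laid end to end. -/
def blockIndex (N : ℕ → ℕ) : ℕ → ℕ × ℕ
  | 0 => (0, 0)
  | i + 1 => match blockIndex N i with
    | (k, j) => if j + 1 < N k then (k, j + 1) else (k + 1, 0)

section blockIndex

variable {N : ℕ → ℕ} {i k j : ℕ}

theorem blockIndex_succ_of_lt (h : blockIndex N i = (k, j)) (hj : j + 1 < N k) :
    blockIndex N (i + 1) = (k, j + 1) := by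
  simp [blockIndex, h, hj]

theorem blockIndex_succ_of_not_lt (h : blockIndex N i = (k, j)) (hj : ¬j + 1 < N k) :
    blockIndex N (i + 1) = (k + 1, 0) := by
  simp [blockIndex, h, hj]

theorem blockIndex_snd_lt (hN : ∀ k, 0 < N k) : ∀ i, (blockIndex N i).2 < N (blockIndex N i).1
  | 0 => hN 0
  | i + 1 => by
    rcases hi : blockIndex N i with ⟨k, j⟩
    by_cases hj : j + 1 < N k
    · simpa [blockIndex_succ_of_lt hi hj] using hj
    · simpa [blockIndex_succ_of_not_lt hi hj] using hN (k + 1)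

theorem monotone_blockIndex_fst (N : ℕ → ℕ) : Monotone fun i => (blockIndex N i).1 := by
  refine monotone_nat_of_le_succ fun i => ?_
  rcases hi : blockIndex N i with ⟨k, j⟩
  by_cases hj : j + 1 < N k
  · simp [blockIndex_succ_of_lt hi hj]
  · simp [blockIndex_succ_of_not_lt hi hj]

theorem blockIndex_add (h : blockIndex N i = (k, 0)) : ∀ j < N k, blockIndex N (i + j) = (k, j)
  | 0, _ => h
  | j + 1, hj => blockIndex_succ_of_lt (blockIndex_add h j (by omega)) hj

theorem exists_blockIndex_eq (hN : ∀ k, 0 < N k) (k : ℕ) : ∃ i, blockIndex N i = (k, 0) := by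
  induction k with
  | zero => exact ⟨0, rfl⟩
  | succ k ih =>
    obtain ⟨i, hi⟩ := ih
    have hlast := blockIndex_add hi (N k - 1) (by have := hN k; omega)
    exact ⟨i + (N k - 1) + 1, blockIndex_succ_of_not_lt hlast (by omega)⟩

end blockIndex

theorem exists_seq_through_of_transGen {α : Type*} {r : α → α → Prop} {g : ℕ → α}
    (hg : ∀ n, TransGen r (g n) (g (n + 1))) :
    ∃ f : ℕ → α, (∀ i, r (f i) (f (i + 1))) ∧ ∃ t : ℕ → ℕ, StrictMono t ∧ ∀ n, f (t n) = g n := by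
  choose N hN p hp0 hpN hp using fun n => (hg n).exists_path
  choose t ht using exists_blockIndex_eq hN
  refine ⟨fun i => p (blockIndex N i).1 (blockIndex N i).2, fun i => ?_, t,
    fun m n hmn => ?_, fun n => by simp [ht, hp0]⟩
  · rcases hi : blockIndex N i with ⟨k, j⟩
    have hj : j < N k := by simpa [hi] using blockIndex_snd_lt hN i
    by_cases hjk : j + 1 < N k
    · simpa [blockIndex_succ_of_lt hi hjk, hi] using hp k j hj
    · have hNk : N k = j + 1 := by omega
      simpa [blockIndex_succ_of_not_lt hi hjk, hi, hp0, ← hpN, hNk] using hp k j hj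
  · by_contra! hnm
    have := monotone_blockIndex_fst N hnm
    simp only [ht] at this
    omega

theorem QuasiTerminating.wellFounded {α : Type*} {r : α → α → Prop} (hqt : QuasiTerminating r) :
    WellFounded fun y x => ReflTransGen r x y ∧ ¬ReflTransGen r y x := by
  refine wellFounded_iff_isEmpty_descending_chain.2 ⟨fun ⟨g, hg⟩ => ?_⟩
  have hstep n : TransGen r (g n) (g (n + 1)) :=
    (reflTransGen_iff_eq_or_transGen.1 (hg n).1).resolve_left fun h => (hg n).2 (h ▸ .refl)
  obtain ⟨f, hf, t, ht, hft⟩ := exists_seq_through_of_transGen hstep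
  have reach {m n : ℕ} (hmn : m ≤ n) : ReflTransGen r (f m) (f n) :=
    Nat.rel_of_forall_rel_succ_of_le _ (fun k => .single (hf k)) hmn
  obtain ⟨a, ha⟩ := hqt f hf
  obtain ⟨i, hi⟩ := ha.nonempty
  obtain ⟨j, hj, hij⟩ := ha.exists_gt (t (i + 1))
  apply (hg i).2
  calc g (i + 1) = f (t (i + 1)) := (hft _).symm
    ReflTransGen r _ (f j) := reach hij.le
    _ = f i := hj.trans hi.symm
    ReflTransGen r _ (f (t i)) := reach (ht.id_le i)
    _ = g i := hft i

theorem exists_quasiNormalForm_general {α : Type*} (r : α → α → Prop)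
    (hqt : QuasiTerminating r) (u : α) :
    ∃ v : α, Relation.ReflTransGen r u v ∧
      ∀ w : α, Relation.ReflTransGen r v w → Relation.ReflTransGen r w v := by
  obtain ⟨v, huv, hmin⟩ := hqt.wellFounded.has_min {v | ReflTransGen r u v} ⟨u, .refl⟩
  refine ⟨v, huv, fun w hvw => ?_⟩
  by_contra hwv
  exact hmin w (huv.trans hvw) ⟨hvw, hwv⟩

theorem exists_quasiNormalForm {α : Type*} (r : α → α → Prop)
    (hqt : QuasiTerminating r) (hc : Confluent r) (u : α) :
    ∃ v : α, Relation.ReflTransGen r u v ∧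
      ∀ w : α, Relation.ReflTransGen r v w → Relation.ReflTransGen r w v :=
  exists_quasiNormalForm_general r hqt u
end
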